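/- Let K ⊆ ℝⁿ be a convex polytope with nonempty interior that is centrally symmetric (K = −K after translating its center to the origin) and has exactly 2m vertices ±v₁,…,±v_m. Then for every positive integer l, Γ_l(K) ≤ Γ_l(K_m^1). -/

import Mathlib

/-! The extreme points of a polytope symmetric about `c` are permuted by the point reflection
through `c`, which fixes only `c`, and `c` is not extreme; so the `2m` vertices come in pairs
`c ± vᵢ`, and the polytope is the image of the cross-polytope `K_m^1` under the affine map
`x ↦ c + ∑ xᵢ vᵢ`. Covering functionals cannot grow under an affine map `f`: a covering
`P ⊆ C + γ • P` becomes `f '' P ⊆ C' + γ • f '' P` with `C' = {f u - γ • f 0 | u ∈ C}`, and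
`C'` can be padded back to `l` points. -/

open Set Pointwise

/-- The covering functional `Γ_l(K)`: the infimum of all `γ > 0` such that `K` can be
covered by `l` translates of `γ • K`. -/
noncomputable def coveringFunctional {n : ℕ} (l : ℕ) (K : Set (Fin n → ℝ)) : ℝ :=
  sInf {γ : ℝ | 0 < γ ∧ ∃ C : Set (Fin n → ℝ), C.Finite ∧ C.ncard = l ∧ K ⊆ C + γ • K}

theorem Function.Involutive.exists_finset_eq_range_union_range {α : Type*} [DecidableEq α]
    {σ : α → α} (hσ : Involutive σ) {m : ℕ} {E : Finset α} (hcard : E.card = 2 * m)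
    (hmaps : ∀ x ∈ E, σ x ∈ E) (hfree : ∀ x ∈ E, σ x ≠ x) :
    ∃ g : Fin m → α, (E : Set α) = range g ∪ range (σ ∘ g) := by
  induction m generalizing E with
  | zero => exact ⟨Fin.elim0, by simp_all⟩
  | succ k ih =>
    obtain ⟨e, he⟩ : E.Nonempty := by rw [← Finset.card_pos, hcard]; omega
    have hσe : σ e ∈ E.erase e := Finset.mem_erase.2 ⟨hfree e he, hmaps e he⟩
    set E' := (E.erase e).erase (σ e)
    have hE' : E = insert e (insert (σ e) E') := by
      rw [Finset.insert_erase hσe, Finset.insert_erase he]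
    have hmem' : ∀ {x}, x ∈ E' ↔ x ≠ σ e ∧ x ≠ e ∧ x ∈ E := by simp [E']
    obtain ⟨g, hg⟩ := ih
      (by rw [Finset.card_erase_of_mem hσe, Finset.card_erase_of_mem he, hcard]; omega)
      (fun x hx => by
        obtain ⟨hxσe, hxe, hxE⟩ := hmem'.1 hx
        exact hmem'.2 ⟨fun h => hxe (hσ.injective h), fun h => hxσe (by rw [← h, hσ]),
          hmaps x hxE⟩)
      (fun x hx => hfree x (hmem'.1 hx).2.2)
    refine ⟨Fin.cons e g, ?_⟩
    rw [Fin.comp_cons, Fin.range_cons, Fin.range_cons, hE', Finset.coe_insert,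
      Finset.coe_insert, hg]
    ext x
    simp only [mem_insert_iff, mem_union]
    tauto

theorem AffineEquiv.image_extremePoints {𝕜 E F : Type*} [Ring 𝕜] [PartialOrder 𝕜]
    [IsOrderedRing 𝕜] [AddCommGroup E] [Module 𝕜 E] [AddCommGroup F] [Module 𝕜 F]
    (f : E ≃ᵃ[𝕜] F) (s : Set E) :
    f '' extremePoints 𝕜 s = extremePoints 𝕜 (f '' s) := by
  ext b
  obtain ⟨a, rfl⟩ := f.surjective b
  have : ∀ x y, f '' openSegment 𝕜 x y = openSegment 𝕜 (f x) (f y) :=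
    image_openSegment 𝕜 f.toAffineMap
  simp only [mem_extremePoints, f.surjective.forall, f.injective.mem_set_image,
    f.injective.eq_iff, ← this]

theorem image_pointReflection_eq_of_symmetric {𝕜 E : Type*} [Ring 𝕜] [AddCommGroup E]
    [Module 𝕜 E] {K : Set E} {c : E} (hK : ∀ x, x ∈ K ↔ c + c - x ∈ K) :
    AffineEquiv.pointReflection 𝕜 c '' K = K := by
  rw [(AffineEquiv.pointReflection_involutive 𝕜 c).image_eq_preimage_symm]
  ext x
  rw [mem_preimage, AffineEquiv.pointReflection_apply, vsub_eq_sub, vadd_eq_add,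
    sub_add_eq_add_sub, ← hK]

theorem center_notMem_extremePoints {𝕜 E : Type*} [Field 𝕜] [LinearOrder 𝕜]
    [IsStrictOrderedRing 𝕜] [AddCommGroup E] [Module 𝕜 E] {K : Set E} {c x : E}
    (hK : MapsTo (AffineEquiv.pointReflection 𝕜 c) K K) (hx : x ∈ K) (hxc : x ≠ c) :
    c ∉ extremePoints 𝕜 K := by
  intro hc
  refine hxc ((mem_extremePoints_iff_left.1 hc).2 x hx _ (hK hx) ?_)
  simpa using midpoint_mem_openSegment (𝕜 := 𝕜) x (AffineEquiv.pointReflection 𝕜 c x)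

theorem exists_extremePoints_eq_range_union_range_pointReflection {E : Type*} [AddCommGroup E]
    [Module ℝ E] {K : Set E} {c : E} {m : ℕ}
    (hK : AffineEquiv.pointReflection ℝ c '' K = K) (hfin : (extremePoints ℝ K).Finite)
    (hcard : (extremePoints ℝ K).ncard = 2 * m) (hm : 0 < m) :
    ∃ g : Fin m → E, extremePoints ℝ K =
      range g ∪ range (AffineEquiv.pointReflection ℝ c ∘ g) := by
  classical
  set σ := AffineEquiv.pointReflection ℝ c
  have hσE : σ '' extremePoints ℝ K = extremePoints ℝ K := by rw [σ.image_extremePoints, hK]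
  obtain ⟨z, hz, hzc⟩ := exists_ne_of_one_lt_ncard (by omega : 1 < (extremePoints ℝ K).ncard) c
  have hcE : c ∉ extremePoints ℝ K :=
    center_notMem_extremePoints (fun x hx => hK.subset (mem_image_of_mem σ hx)) hz.1 hzc
  obtain ⟨g, hg⟩ := (AffineEquiv.pointReflection_involutive ℝ c).exists_finset_eq_range_union_range
    (E := hfin.toFinset) (by rwa [← ncard_eq_toFinset_card _ hfin])
    (fun x hx => hfin.mem_toFinset.2 (hσE ▸ mem_image_of_mem σ (hfin.mem_toFinset.1 hx)))
    (fun x hx hσx => hcE ((AffineEquiv.pointReflection_fixed_iff_of_module ℝ).1 hσx ▸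
      hfin.mem_toFinset.1 hx))
  exact ⟨g, by simpa using hg⟩

theorem convexHull_extremePoints_convexHull {E : Type*} [AddCommGroup E] [Module ℝ E]
    [TopologicalSpace E] [T2Space E] [IsTopologicalAddGroup E] [ContinuousSMul ℝ E]
    [LocallyConvexSpace ℝ E] {V : Set E} (hV : V.Finite) :
    convexHull ℝ (extremePoints ℝ (convexHull ℝ V)) = convexHull ℝ V := by
  have hfin : (extremePoints ℝ (convexHull ℝ V)).Finite :=
    hV.subset extremePoints_convexHull_subset
  rw [← (hfin.isClosed_convexHull ℝ).closure_eq,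
    closure_convexHull_extremePoints (hV.isCompact_convexHull ℝ) (convex_convexHull ℝ V)]

def crossPolytope (m : ℕ) : Set (Fin m → ℝ) := {x | ∑ i, |x i| ≤ 1}

theorem convex_crossPolytope (m : ℕ) : Convex ℝ (crossPolytope m) := by
  intro a ha b hb θ₁ θ₂ hθ₁ hθ₂ hsum
  calc ∑ i, |θ₁ * a i + θ₂ * b i| ≤ ∑ i, (θ₁ * |a i| + θ₂ * |b i|) :=
        Finset.sum_le_sum fun i _ => (abs_add_le _ _).trans_eq <| by
          rw [abs_mul, abs_mul, abs_of_nonneg hθ₁, abs_of_nonneg hθ₂]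
    _ = θ₁ * ∑ i, |a i| + θ₂ * ∑ i, |b i| := by
        rw [Finset.sum_add_distrib, Finset.mul_sum, Finset.mul_sum]
    _ ≤ θ₁ * 1 + θ₂ * 1 := by gcongr <;> assumption
    _ = 1 := by rw [mul_one, mul_one, hsum]

theorem crossPolytope_eq_convexHull {m : ℕ} (hm : 0 < m) :
    crossPolytope m = convexHull ℝ
      (range (fun i => Pi.single i 1) ∪ range (fun i => -Pi.single i 1)) := by
  set S : Set (Fin m → ℝ) := range (fun i => Pi.single i 1) ∪ range (fun i => -Pi.single i 1)
  have hsingle_mem : ∀ i, Pi.single i 1 ∈ crossPolytope m := fun i => by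
    simp [crossPolytope, Pi.single_apply, apply_ite]
  refine subset_antisymm (fun x hx => ?_) (convexHull_min ?_ (convex_crossPolytope m))
  · have hconv : Convex ℝ (convexHull ℝ S) := convex_convexHull ℝ S
    have hS : S ⊆ convexHull ℝ S := subset_convexHull ℝ S
    have hzero : (0 : Fin m → ℝ) ∈ convexHull ℝ S := by
      simpa using hconv (hS (Or.inl ⟨⟨0, hm⟩, rfl⟩)) (hS (Or.inr ⟨⟨0, hm⟩, rfl⟩))
        (by norm_num : (0 : ℝ) ≤ 1 / 2) (by norm_num : (0 : ℝ) ≤ 1 / 2) (by norm_num)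
    -- weights `|xᵢ|` on the vertices `± eᵢ`, and the slack `1 - ∑ |xᵢ|` on `0`
    let w : Option (Fin m) → ℝ := fun j => j.elim (1 - ∑ i, |x i|) fun i => |x i|
    let z : Option (Fin m) → Fin m → ℝ := fun j =>
      j.elim 0 fun i => if 0 ≤ x i then Pi.single i 1 else -Pi.single i 1
    have hz : ∀ i, w (some i) • z (some i) = x i • Pi.single i 1 := fun i => by
      by_cases h : 0 ≤ x i
      · simp [w, z, h, abs_of_nonneg h]
      · simp [w, z, h, abs_of_neg (not_le.1 h)]
    have hx' : x = ∑ j, w j • z j := by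
      simp only [Fintype.sum_option, hz, ← pi_eq_sum_univ' x]
      simp [z]
    rw [hx']
    refine hconv.sum_mem (fun j _ => ?_) ?_ (fun j _ => ?_)
    · rcases j with _ | i
      · exact sub_nonneg.2 hx
      · exact abs_nonneg _
    · simp [w, Fintype.sum_option]
    · rcases j with _ | i
      · exact hzero
      · refine hS ?_
        by_cases h : 0 ≤ x i <;> simp [z, h, S]
  · rintro _ (⟨i, rfl⟩ | ⟨i, rfl⟩)
    · exact hsingle_mem i
    · simpa [crossPolytope] using hsingle_mem i

theorem AffineMap.map_neg_eq_pointReflection {𝕜 E F : Type*} [Ring 𝕜] [AddCommGroup E]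
    [Module 𝕜 E] [AddCommGroup F] [Module 𝕜 F] (f : E →ᵃ[𝕜] F) (x : E) :
    f (-x) = AffineEquiv.pointReflection 𝕜 (f 0) (f x) := by
  have h₁ := f.linearMap_vsub (-x) 0
  have h₂ := f.linearMap_vsub x 0
  simp only [vsub_eq_sub, sub_zero, _root_.map_neg] at h₁ h₂
  rw [AffineEquiv.pointReflection_apply, vsub_eq_sub, vadd_eq_add]
  linear_combination (norm := module) -h₁ - h₂

theorem AffineMap.image_crossPolytope {m : ℕ} (hm : 0 < m) {F : Type*} [AddCommGroup F]
    [Module ℝ F] (f : (Fin m → ℝ) →ᵃ[ℝ] F) :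
    f '' crossPolytope m = convexHull ℝ (range (fun i => f (Pi.single i 1)) ∪
      range (fun i => AffineEquiv.pointReflection ℝ (f 0) (f (Pi.single i 1)))) := by
  simp only [crossPolytope_eq_convexHull hm, f.image_convexHull, image_union, ← range_comp,
    Function.comp_def, f.map_neg_eq_pointReflection]

theorem exists_affineMap_image_crossPolytope_eq {m : ℕ} (hm : 0 < m) {F : Type*}
    [AddCommGroup F] [Module ℝ F] (c : F) (g : Fin m → F) :
    ∃ f : (Fin m → ℝ) →ᵃ[ℝ] F, f '' crossPolytope m =
      convexHull ℝ (range g ∪ range (AffineEquiv.pointReflection ℝ c ∘ g)) := by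
  let f : (Fin m → ℝ) →ᵃ[ℝ] F :=
    (Fintype.linearCombination ℝ fun i => g i - c).toAffineMap + AffineMap.const ℝ _ c
  have hf₀ : f 0 = c := by simp [f]
  have hf : ∀ i, f (Pi.single i 1) = g i := by simp [f, Fintype.linearCombination_apply_single]
  refine ⟨f, ?_⟩
  simp only [f.image_crossPolytope hm, hf₀, hf]
  rfl

theorem AffineMap.image_subset_add_smul_image {𝕜 E F : Type*} [Ring 𝕜] [AddCommGroup E]
    [Module 𝕜 E] [AddCommGroup F] [Module 𝕜 F] (f : E →ᵃ[𝕜] F) {s C : Set E} {γ : 𝕜}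
    (h : s ⊆ C + γ • s) :
    f '' s ⊆ (fun u => f u - γ • f 0) '' C + γ • f '' s := by
  rintro _ ⟨x, hx, rfl⟩
  obtain ⟨u, hu, _, ⟨p, hp, rfl⟩, rfl⟩ := h hx
  refine ⟨_, mem_image_of_mem _ hu, _, smul_mem_smul_set (mem_image_of_mem f hp), ?_⟩
  have h := f.linearMap_vsub (u + γ • p) u
  have h' := f.linearMap_vsub p 0
  simp only [vsub_eq_sub, add_sub_cancel_left, sub_zero, map_smul] at h h'
  rw [h', smul_sub] at h
  rw [eq_sub_iff_add_eq] at h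
  show f u - γ • f 0 + γ • f p = f (u + γ • p)
  rw [← h]
  abel

theorem exists_finite_ncard_eq_of_subset_add_smul {E : Type*} [AddCommGroup E] [Module ℝ E]
    [Infinite E] {K C : Set E} {γ : ℝ} {l : ℕ} (hl : 0 < l) (hC : C.Finite) (hCl : C.ncard ≤ l)
    (hK : K ⊆ C + γ • K) :
    ∃ C' : Set E, C'.Finite ∧ C'.ncard = l ∧ K ⊆ C' + γ • K := by
  obtain ⟨C', hCC', -, hC'l⟩ := infinite_univ.exists_superset_ncard_eq (subset_univ C) hC hCl
  exact ⟨C', finite_of_ncard_pos (hC'l ▸ hl), hC'l, hK.trans (add_subset_add_right hCC')⟩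

theorem coveringFunctional_image_le {m n l : ℕ} (hm : 0 < m) (hn : 0 < n) (hl : 0 < l)
    (f : (Fin m → ℝ) →ᵃ[ℝ] (Fin n → ℝ)) (P : Set (Fin m → ℝ)) :
    coveringFunctional l (f '' P) ≤ coveringFunctional l P := by
  have : Nonempty (Fin m) := ⟨⟨0, hm⟩⟩
  have : Nonempty (Fin n) := ⟨⟨0, hn⟩⟩
  refine csInf_le_csInf ⟨0, fun γ hγ => hγ.1.le⟩ ?_ ?_
  · obtain ⟨C, hC, hCl, hPC⟩ := exists_finite_ncard_eq_of_subset_add_smul (K := P) (γ := 1) hl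
      (finite_singleton 0) (by rw [ncard_singleton]; exact hl) (by simp)
    exact ⟨1, one_pos, C, hC, hCl, hPC⟩
  · rintro γ ⟨hγ, C, hC, hCl, hPC⟩
    obtain ⟨C', hC', hC'l, hfC'⟩ := exists_finite_ncard_eq_of_subset_add_smul hl (hC.image _)
      ((ncard_image_le hC).trans hCl.le) (f.image_subset_add_smul_image hPC)
    exact ⟨hγ, C', hC', hC'l, hfC'⟩

/-- If `K ⊆ ℝⁿ` is a convex polytope with nonempty interior which is centrally
symmetric (symmetric about some center `c`) and has exactly `2m` vertices (extreme
points), then `Γ_l(K) ≤ Γ_l(K_m^1)` for every positive integer `l`, where `K_m^1` is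
the standard `m`-dimensional cross-polytope. -/
theorem coveringFunctional_le_crosspolytope (n m : ℕ) (K : Set (Fin n → ℝ))
    (hpoly : ∃ V : Finset (Fin n → ℝ), K = convexHull ℝ (V : Set (Fin n → ℝ)))
    (hint : (interior K).Nonempty)
    (hsym : ∃ c : Fin n → ℝ, ∀ x, x ∈ K ↔ c + c - x ∈ K)
    (hvert : (Set.extremePoints ℝ K).ncard = 2 * m)
    (l : ℕ) (hl : 0 < l) :
    coveringFunctional l K ≤
      coveringFunctional l {x : Fin m → ℝ | (∑ i, |x i|) ≤ 1} := by
  obtain ⟨V, rfl⟩ := hpoly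
  obtain ⟨c, hc⟩ := hsym
  have hEfin := V.finite_toSet.subset (extremePoints_convexHull_subset (𝕜 := ℝ))
  have hKE := convexHull_extremePoints_convexHull V.finite_toSet
  have hm : 0 < m := by
    refine Nat.pos_of_ne_zero fun hm₀ => ?_
    rw [hm₀, mul_zero, ncard_eq_zero hEfin] at hvert
    rw [← hKE, hvert, convexHull_empty, interior_empty] at hint
    exact not_nonempty_empty hint
  have hn : 0 < n := by
    refine Nat.pos_of_ne_zero fun hn₀ => ?_
    subst hn₀
    have := hvert ▸ ncard_le_one_of_subsingleton
      (extremePoints ℝ (convexHull ℝ (V : Set (Fin 0 → ℝ))))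
    omega
  obtain ⟨g, hg⟩ := exists_extremePoints_eq_range_union_range_pointReflection
    (image_pointReflection_eq_of_symmetric hc) hEfin hvert hm
  obtain ⟨f, hf⟩ := exists_affineMap_image_crossPolytope_eq hm c g
  rw [← hKE, hg, ← hf]
  exact coveringFunctional_image_le hm hn hl f _
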